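/- Let q + 1 = p₀^{k₀}·p₁^{k₁}·…·p_r^{k_r} be the prime factorization of q+1, q an odd prime power, a a non-square in F_q^*, and gcd(n, q+1) = 1. The Rédei permutation R_n of F_q has all cycles of length j or fixed points if and only if for each 0 ≤ ℓ ≤ r one of the following holds: (i) n ≡ 1 (mod p_ℓ^{k_ℓ}); (ii) j = ord_{p_ℓ^{k_ℓ}}(n) and j divides p_ℓ − 1; (iii) j = ord_{p_ℓ^{k_ℓ}}(n), k_ℓ ≥ 2, and j = p_ℓ. -/

import Mathlib

/-!
Let `s = √a` in an algebraically closed extension `K` of `F`. Frobenius sends `s` to `-s`, so the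
Cayley map `x ↦ (x + s) / (x - s)` sends `F` injectively onto the `(q + 1)`-th roots of unity
other than `1`, and since `(x ± s) ^ n = G_n(x) ± H_n(x) s` it conjugates `R_n` to `u ↦ u ^ n`.
Hence the cycle of `x` has length `ord_d(n)`, where `d ≠ 1` is the order of the image of `x`, and
every divisor `d ≠ 1` of `q + 1` occurs. Whether all `ord_d(n)` lie in `{1, j}` is then decided
prime by prime: along `i ↦ ord_{p^i}(n)` the order can only grow by a factor `p` at each step, and
it is constant once it is prime to `p`.
-/

/-- The Rédei function `R_n(x, a) = G_n(x,a) / H_n(x,a)` over a field `F`, where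
`(x + √a)^n = G_n(x,a) + H_n(x,a)·√a`.  Equivalently, `G_n` and `H_n` are the
coefficients of `1` and `X` in `(C x + X)^n` reduced modulo `X^2 - C a`. -/
noncomputable def redeiFun {F : Type*} [Field F] (a : F) (n : ℕ) (x : F) : F :=
  ((Polynomial.C x + Polynomial.X) ^ n %ₘ (Polynomial.X ^ 2 - Polynomial.C a)).coeff 0 /
    ((Polynomial.C x + Polynomial.X) ^ n %ₘ (Polynomial.X ^ 2 - Polynomial.C a)).coeff 1

theorem pow_dvd_sub_pow_of_pow_dvd_sub {R : Type*} [CommRing R] {p i : ℕ} {a b : R} (hi : i ≠ 0)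
    (h : (p : R) ^ i ∣ a - b) : ∀ c : ℕ, (p : R) ^ (i + c) ∣ a ^ p ^ c - b ^ p ^ c
  | 0 => by simpa using h
  | c + 1 => by
    have hc := pow_dvd_sub_pow_of_pow_dvd_sub hi h c
    rw [pow_succ p c, pow_mul, pow_mul, ← geom_sum₂_mul, ← add_assoc, pow_succ']
    exact mul_dvd_mul (dvd_geom_sum₂_self ((dvd_pow_self _ (by omega)).trans hc)) hc

theorem Nat.exists_le_lt_and_not_succ {P : ℕ → Prop} {a b : ℕ} (hab : a ≤ b) (ha : P a)
    (hb : ¬ P b) : ∃ i, a ≤ i ∧ i < b ∧ P i ∧ ¬ P (i + 1) := by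
  induction b, hab using Nat.le_induction with
  | base => exact absurd ha hb
  | succ b hab ih =>
    by_cases hPb : P b
    · exact ⟨b, hab, lt_add_one b, hPb, hb⟩
    · obtain ⟨i, hai, hib, hPi, hPi'⟩ := ih hPb
      exact ⟨i, hai, hib.trans (lt_add_one b), hPi, hPi'⟩

theorem Nat.modEq_of_forall_ordProj_modEq {N a b : ℕ} (hN : N ≠ 0)
    (h : ∀ p, p.Prime → p ∣ N → a ≡ b [MOD p ^ N.factorization p]) : a ≡ b [MOD N] := by
  rw [Nat.modEq_iff_dvd, Int.natCast_dvd, Nat.dvd_iff_prime_pow_dvd_dvd]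
  intro p k hp hpk
  rcases Nat.eq_zero_or_pos k with rfl | hk
  · exact (pow_zero p).symm ▸ one_dvd _
  have hpN : p ∣ N := (dvd_pow_self p hk.ne').trans hpk
  have hkN : p ^ k ∣ p ^ N.factorization p :=
    pow_dvd_pow p ((hp.pow_dvd_iff_le_factorization hN).mp hpk)
  exact hkN.trans (Int.natCast_dvd.mp (Nat.modEq_iff_dvd.mp (h p hp hpN)))

namespace ZMod

theorem natCast_eq_one_iff_modEq {m n : ℕ} : (n : ZMod m) = 1 ↔ n ≡ 1 [MOD m] := by
  rw [← Nat.cast_one, natCast_eq_natCast_iff]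

theorem orderOf_natCast_dvd_iff {m n k : ℕ} : orderOf (n : ZMod m) ∣ k ↔ n ^ k ≡ 1 [MOD m] := by
  rw [orderOf_dvd_iff_pow_eq_one, ← Nat.cast_pow, natCast_eq_one_iff_modEq]

theorem orderOf_natCast_dvd_of_dvd {m m' : ℕ} (n : ℕ) (h : m' ∣ m) :
    orderOf (n : ZMod m') ∣ orderOf (n : ZMod m) :=
  orderOf_natCast_dvd_iff.mpr ((orderOf_natCast_dvd_iff.mp dvd_rfl).of_dvd h)

theorem orderOf_natCast_pow_add_dvd {p i : ℕ} (n : ℕ) (hi : i ≠ 0) (c : ℕ) :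
    orderOf (n : ZMod (p ^ (i + c))) ∣ orderOf (n : ZMod (p ^ i)) * p ^ c := by
  have h := orderOf_natCast_dvd_iff.mp (dvd_refl (orderOf (n : ZMod (p ^ i))))
  rw [Nat.ModEq.comm, Nat.modEq_iff_dvd] at h
  rw [orderOf_natCast_dvd_iff, pow_mul, Nat.ModEq.comm, Nat.modEq_iff_dvd]
  push_cast at h ⊢
  simpa using pow_dvd_sub_pow_of_pow_dvd_sub hi h c

theorem orderOf_natCast_pow_eq_of_coprime {p i e : ℕ} (n : ℕ) (hi : i ≠ 0) (hie : i ≤ e)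
    (hcop : (orderOf (n : ZMod (p ^ e))).Coprime p) :
    orderOf (n : ZMod (p ^ i)) = orderOf (n : ZMod (p ^ e)) := by
  obtain ⟨c, rfl⟩ := Nat.exists_eq_add_of_le hie
  exact Nat.dvd_antisymm (orderOf_natCast_dvd_of_dvd n (pow_dvd_pow p hie))
    ((hcop.pow_right c).dvd_of_dvd_mul_right (orderOf_natCast_pow_add_dvd n hi c))


def OrdProjCases (N n j p : ℕ) : Prop :=
  (n : ZMod (p ^ N.factorization p)) = 1 ∨
    (orderOf (n : ZMod (p ^ N.factorization p)) = j ∧ j ∣ p - 1) ∨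
    (orderOf (n : ZMod (p ^ N.factorization p)) = j ∧ 2 ≤ N.factorization p ∧ j = p)

theorem ordProjCases_of_forall_dvd {N n j p : ℕ} (hN : N ≠ 0) (hcop : n.Coprime N)
    (h : ∀ d, d ∣ N → orderOf (n : ZMod d) = j ∨ orderOf (n : ZMod d) = 1) (hp : p.Prime)
    (hpN : p ∣ N) : OrdProjCases N n j p := by
  set e := N.factorization p
  have he : 1 ≤ e := hp.factorization_pos_of_dvd hN hpN
  have hpeN : p ^ e ∣ N := Nat.ordProj_dvd N p
  by_cases h1 : (n : ZMod (p ^ e)) = 1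
  · exact Or.inl h1
  have hord : orderOf (n : ZMod (p ^ e)) = j :=
    (h _ hpeN).resolve_right (mt orderOf_eq_one_iff.mp h1)
  right
  rcases h p hpN with hpj | hp1
  · have := Fact.mk hp
    have hn0 : (n : ZMod p) ≠ 0 := by
      rw [Ne, natCast_eq_zero_iff]
      exact hp.coprime_iff_not_dvd.mp (hcop.coprime_dvd_right hpN).symm
    exact Or.inl ⟨hord, hpj ▸ orderOf_dvd_card_sub_one hn0⟩
  · obtain ⟨i, hi, hie, hPi, hPi'⟩ := Nat.exists_le_lt_and_not_succ
      (P := fun i => orderOf (n : ZMod (p ^ i)) = 1) he (by rwa [pow_one])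
      (fun he1 => h1 (orderOf_eq_one_iff.mp he1))
    have hdvd : orderOf (n : ZMod (p ^ (i + 1))) ∣ p := by
      simpa [hPi] using orderOf_natCast_pow_add_dvd (p := p) (i := i) n (by omega) 1
    have hjp : orderOf (n : ZMod (p ^ (i + 1))) = j :=
      (h _ ((pow_dvd_pow p hie).trans hpeN)).resolve_right hPi'
    exact Or.inr ⟨hord, by omega, hjp ▸ (hp.eq_one_or_self_of_dvd _ hdvd).resolve_left hPi'⟩

theorem orderOf_natCast_eq_or_eq_one_of_ordProjCases {N n j d : ℕ} (hN : N ≠ 0)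
    (h : ∀ p, p.Prime → p ∣ N → OrdProjCases N n j p) (hd : d ∣ N) : orderOf (n : ZMod d) = j ∨ orderOf (n : ZMod d) = 1 := by
  have hdj : orderOf (n : ZMod d) ∣ j := by
    refine (orderOf_natCast_dvd_of_dvd n hd).trans (orderOf_natCast_dvd_iff.mpr ?_)
    refine Nat.modEq_of_forall_ordProj_modEq hN fun p hp hpN => orderOf_natCast_dvd_iff.mp ?_
    rcases h p hp hpN with h1 | ⟨hj, -⟩ | ⟨hj, -⟩
    · exact orderOf_eq_one_iff.mpr h1 ▸ one_dvd j
    all_goals exact hj.dvd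
  by_cases hd1 : (n : ZMod d) = 1
  · exact Or.inr (orderOf_eq_one_iff.mpr hd1)
  have hd0 : d ≠ 0 := ne_zero_of_dvd_ne_zero hN hd
  obtain ⟨p, hp, hpd, hpi⟩ : ∃ p, p.Prime ∧ p ∣ d ∧ (n : ZMod (p ^ d.factorization p)) ≠ 1 := by
    by_contra! hall
    exact hd1 (natCast_eq_one_iff_modEq.mpr (Nat.modEq_of_forall_ordProj_modEq hd0
      fun p hp hpd => natCast_eq_one_iff_modEq.mp (hall p hp hpd)))
  set i := d.factorization p
  have hi : i ≠ 0 := (hp.factorization_pos_of_dvd hd0 hpd).ne'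
  have hie : i ≤ N.factorization p :=
    (hp.pow_dvd_iff_le_factorization hN).mp ((Nat.ordProj_dvd d p).trans hd)
  have hj_dvd : j ∣ orderOf (n : ZMod (p ^ i)) := by
    rcases h p hp (hpd.trans hd) with h1 | ⟨hj, hjp⟩ | ⟨hj, -, hjp⟩
    · exact absurd (natCast_eq_one_iff_modEq.mpr
        ((natCast_eq_one_iff_modEq.mp h1).of_dvd (pow_dvd_pow p hie))) hpi
    · have hcop : j.Coprime p := Nat.Coprime.coprime_dvd_left hjp
        ((Nat.coprime_self_sub_left hp.one_le).mpr (Nat.coprime_one_left p))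
      rw [orderOf_natCast_pow_eq_of_coprime n hi hie (hj ▸ hcop), hj]
    · have hdvd : orderOf (n : ZMod (p ^ i)) ∣ p := by
        simpa only [hj, hjp] using orderOf_natCast_dvd_of_dvd n (pow_dvd_pow p hie)
      rw [(hp.eq_one_or_self_of_dvd _ hdvd).resolve_left (mt orderOf_eq_one_iff.mp hpi), hjp]
  exact Or.inl (Nat.dvd_antisymm hdj
    (hj_dvd.trans (orderOf_natCast_dvd_of_dvd n (Nat.ordProj_dvd d p))))

theorem forall_dvd_orderOf_natCast_iff {N n j : ℕ} (hN : N ≠ 0) (hcop : n.Coprime N) :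
    (∀ d, d ∣ N → orderOf (n : ZMod d) = j ∨ orderOf (n : ZMod d) = 1) ↔
      ∀ p, p.Prime → p ∣ N → OrdProjCases N n j p :=
  ⟨fun h _ hp hpN => ordProjCases_of_forall_dvd hN hcop h hp hpN,
    fun h _ hd => orderOf_natCast_eq_or_eq_one_of_ordProjCases hN h hd⟩

end ZMod

theorem Function.Semiconj.minimalPeriod_eq {α β : Type*} {f : α → α} {g : β → β} {h : α → β}
    (hsc : Function.Semiconj h f g) (hinj : Function.Injective h) (x : α) :
    Function.minimalPeriod g (h x) = Function.minimalPeriod f x :=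
  Function.minimalPeriod_eq_minimalPeriod_iff.mpr fun k =>
    ⟨fun hk => hinj ((hsc.iterate_right k x).trans hk), fun hk => hk.map hsc⟩

theorem IsOfFinOrder.minimalPeriod_pow {G : Type*} [Monoid G] {u : G} (hu : IsOfFinOrder u)
    (n : ℕ) : Function.minimalPeriod (· ^ n) u = orderOf (n : ZMod (orderOf u)) := by
  refine Nat.dvd_right_iff_eq.mp fun k => ?_
  rw [← Function.isPeriodicPt_iff_minimalPeriod_dvd, Function.IsPeriodicPt, Function.IsFixedPt,
    pow_iterate, ZMod.orderOf_natCast_dvd_iff, ← hu.pow_eq_pow_iff_modEq, pow_one]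

open Polynomial

theorem FiniteField.exists_algebraMap_eq_of_pow_card_eq {F K : Type*} [Field F] [Fintype F]
    [Field K] [Algebra F K] {y : K} (hy : y ^ Fintype.card F = y) :
    ∃ c : F, algebraMap F K c = y := by
  have hmon : (X ^ Fintype.card F - X : F[X]).Monic :=
    monic_X_pow_sub (by rw [degree_X]; exact_mod_cast Fintype.one_lt_card)
  have hroots := hmon.roots_map_of_card_eq_natDegree (algebraMap F K) (by
    rw [FiniteField.roots_X_pow_card_sub_X, FiniteField.X_pow_card_sub_X_natDegree_eq F
      Fintype.one_lt_card]
    rfl)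
  have hy : y ∈ ((X ^ Fintype.card F - X : F[X]).map (algebraMap F K)).roots := by
    rw [mem_roots (hmon.map _).ne_zero]
    simp [hy]
  rw [← hroots, Multiset.mem_map] at hy
  obtain ⟨c, -, hc⟩ := hy
  exact ⟨c, hc⟩

noncomputable def redeiG {F : Type*} [Field F] (a : F) (n : ℕ) (x : F) : F :=
  ((C x + X) ^ n %ₘ (X ^ 2 - C a)).coeff 0

noncomputable def redeiH {F : Type*} [Field F] (a : F) (n : ℕ) (x : F) : F :=
  ((C x + X) ^ n %ₘ (X ^ 2 - C a)).coeff 1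

theorem redeiFun_eq_div {F : Type*} [Field F] (a : F) (n : ℕ) (x : F) :
    redeiFun a n x = redeiG a n x / redeiH a n x :=
  rfl

theorem algebraMap_add_pow_eq_redei {F K : Type*} [Field F] [CommRing K] [Algebra F K] {a : F}
    {t : K} (ht : t ^ 2 = algebraMap F K a) (n : ℕ) (x : F) :
    (algebraMap F K x + t) ^ n =
      algebraMap F K (redeiG a n x) + algebraMap F K (redeiH a n x) * t := by
  have hmon : (X ^ 2 - C a).Monic := monic_X_pow_sub_C a two_ne_zero
  have hroot : aeval t (X ^ 2 - C a) = 0 := by simp [ht]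
  have hdeg : ((C x + X) ^ n %ₘ (X ^ 2 - C a)).natDegree ≤ 1 := by
    have := natDegree_modByMonic_lt ((C x + X) ^ n) hmon
      (fun h => by simpa using congrArg natDegree h)
    rw [natDegree_X_pow_sub_C] at this
    omega
  calc (algebraMap F K x + t) ^ n = aeval t ((C x + X) ^ n) := by simp
    _ = aeval t ((C x + X) ^ n %ₘ (X ^ 2 - C a)) := (aeval_modByMonic_eq_self_of_root hroot).symm
    _ = _ := by
      rw [eq_X_add_C_of_natDegree_le_one hdeg]
      simp only [map_add, map_mul, aeval_C, aeval_X, redeiG, redeiH]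
      ring

theorem two_ne_zero_of_ringChar_ne_two {F K : Type*} [Field F] [Field K] [Algebra F K]
    (hF : ringChar F ≠ 2) : (2 : K) ≠ 0 :=
  Ring.two_ne_zero (Algebra.ringChar_eq F K ▸ hF)

section QuadraticExtension

variable {F K : Type*} [Field F] [Field K] [Algebra F K] {a : F} {s : K}

theorem algebraMap_ne_of_sq_eq (hs : s ^ 2 = algebraMap F K a) (hns : ¬IsSquare a) (x : F) :
    algebraMap F K x ≠ s := by
  rintro rfl
  exact hns ⟨x, (algebraMap F K).injective (by rw [← hs, map_mul, sq])⟩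

theorem ne_zero_of_sq_eq (hs : s ^ 2 = algebraMap F K a) (hns : ¬IsSquare a) : s ≠ 0 :=
  fun h => algebraMap_ne_of_sq_eq hs hns 0 (by rw [map_zero, h])

theorem algebraMap_sub_ne_zero (hs : s ^ 2 = algebraMap F K a) (hns : ¬IsSquare a) (x : F) :
    algebraMap F K x - s ≠ 0 :=
  sub_ne_zero.mpr (algebraMap_ne_of_sq_eq hs hns x)

theorem algebraMap_add_ne_zero (hs : s ^ 2 = algebraMap F K a) (hns : ¬IsSquare a) (x : F) :
    algebraMap F K x + s ≠ 0 := by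
  simpa using algebraMap_sub_ne_zero (s := -s) (by rwa [neg_sq]) hns x

variable (s) in
noncomputable def cayley (x : F) : K :=
  (algebraMap F K x + s) / (algebraMap F K x - s)

theorem cayley_injective (hF : ringChar F ≠ 2) (hs : s ^ 2 = algebraMap F K a)
    (hns : ¬IsSquare a) : Function.Injective (cayley s : F → K) := by
  intro y z hyz
  rw [cayley, cayley, div_eq_div_iff (algebraMap_sub_ne_zero hs hns y)
    (algebraMap_sub_ne_zero hs hns z)] at hyz
  have h : 2 * s * (algebraMap F K z - algebraMap F K y) = 0 := by linear_combination hyz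
  exact (algebraMap F K).injective (sub_eq_zero.mp ((mul_eq_zero.mp h).resolve_left
    (mul_ne_zero (two_ne_zero_of_ringChar_ne_two hF) (ne_zero_of_sq_eq hs hns)))).symm

theorem cayley_ne_one (hF : ringChar F ≠ 2) (hs : s ^ 2 = algebraMap F K a) (hns : ¬IsSquare a)
    (x : F) : cayley s x ≠ 1 := by
  rw [cayley, Ne, div_eq_one_iff_eq (algebraMap_sub_ne_zero hs hns x)]
  intro h
  exact mul_ne_zero (two_ne_zero_of_ringChar_ne_two hF) (ne_zero_of_sq_eq hs hns)
    (by linear_combination h)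

variable [Fintype F]

theorem pow_card_eq_neg_of_sq_eq (hF : ringChar F ≠ 2) (hs : s ^ 2 = algebraMap F K a)
    (hns : ¬IsSquare a) : s ^ Fintype.card F = -s := by
  have ha : a ≠ 0 := by rintro rfl; exact hns (IsSquare.zero)
  have hpow : a ^ (Fintype.card F / 2) = -1 :=
    (FiniteField.pow_dichotomy hF ha).resolve_left (mt (FiniteField.isSquare_iff hF ha).mpr hns)
  have hodd : Odd (Fintype.card F) := Nat.odd_iff.mpr (FiniteField.odd_card_of_char_ne_two hF)
  rw [← Nat.two_mul_div_two_add_one_of_odd hodd, pow_succ, pow_mul, hs, ← map_pow, hpow]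
  simp

theorem algebraMap_add_pow_card (hF : ringChar F ≠ 2) (hs : s ^ 2 = algebraMap F K a)
    (hns : ¬IsSquare a) (x : F) :
    (algebraMap F K x + s) ^ Fintype.card F = algebraMap F K x - s := by
  calc (algebraMap F K x + s) ^ Fintype.card F
      = FiniteField.frobeniusAlgHom F K (algebraMap F K x + s) := rfl
    _ = algebraMap F K x + s ^ Fintype.card F := by rw [map_add, AlgHom.commutes]; rfl
    _ = algebraMap F K x - s := by rw [pow_card_eq_neg_of_sq_eq hF hs hns, sub_eq_add_neg]

theorem cayley_pow_card_add_one (hF : ringChar F ≠ 2) (hs : s ^ 2 = algebraMap F K a)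
    (hns : ¬IsSquare a) (x : F) : cayley s x ^ (Fintype.card F + 1) = 1 := by
  have hs' : (-s) ^ 2 = algebraMap F K a := by rwa [neg_sq]
  have hminus := algebraMap_add_pow_card hF hs' hns x
  rw [← sub_eq_add_neg, sub_neg_eq_add] at hminus
  rw [cayley, pow_succ, div_pow, algebraMap_add_pow_card hF hs hns, hminus,
    div_mul_div_comm, mul_comm, div_self]
  exact mul_ne_zero (algebraMap_add_ne_zero hs hns x) (algebraMap_sub_ne_zero hs hns x)

theorem exists_cayley_eq (hF : ringChar F ≠ 2) (hs : s ^ 2 = algebraMap F K a)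
    (hns : ¬IsSquare a) {u : K} (hu : u ^ (Fintype.card F + 1) = 1) (hu1 : u ≠ 1) :
    ∃ x : F, cayley s x = u := by
  have hu0 : u ≠ 0 := by rintro rfl; simp at hu
  have huq : u ^ Fintype.card F = u⁻¹ := eq_inv_of_mul_eq_one_left (by rw [← pow_succ, hu])
  have hu1' : u - 1 ≠ 0 := sub_ne_zero.mpr hu1
  let φ := FiniteField.frobeniusAlgHom F K
  -- the inverse Cayley transform of `u`; it is fixed by Frobenius because `u ^ q = u⁻¹`
  have hy : (s * (u + 1) / (u - 1)) ^ Fintype.card F = s * (u + 1) / (u - 1) := by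
    calc (s * (u + 1) / (u - 1)) ^ Fintype.card F = φ (s * (u + 1) / (u - 1)) := rfl
      _ = φ s * (φ u + 1) / (φ u - 1) := by
          simp only [map_div₀, map_mul, map_add, map_sub, map_one]
      _ = -s * (u⁻¹ + 1) / (u⁻¹ - 1) := by
          simp only [φ, FiniteField.coe_frobeniusAlgHom, pow_card_eq_neg_of_sq_eq hF hs hns, huq]
      _ = s * (u + 1) / (u - 1) := by
          have : 1 - u ≠ 0 := sub_ne_zero.mpr hu1.symm
          field_simp
          ring
  obtain ⟨x, hx⟩ := FiniteField.exists_algebraMap_eq_of_pow_card_eq hy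
  rw [eq_div_iff hu1'] at hx
  refine ⟨x, ?_⟩
  rw [cayley, div_eq_iff (algebraMap_sub_ne_zero hs hns x)]
  linear_combination -hx

theorem isOfFinOrder_cayley (hF : ringChar F ≠ 2) (hs : s ^ 2 = algebraMap F K a)
    (hns : ¬IsSquare a) (x : F) : IsOfFinOrder (cayley s x) :=
  isOfFinOrder_iff_pow_eq_one.mpr ⟨_, Nat.succ_pos _, cayley_pow_card_add_one hF hs hns x⟩

theorem cayley_redeiFun {n : ℕ} (hF : ringChar F ≠ 2) (hs : s ^ 2 = algebraMap F K a)
    (hns : ¬IsSquare a) (hcop : n.Coprime (Fintype.card F + 1)) (x : F) :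
    cayley s (redeiFun a n x) = cayley s x ^ n := by
  have hplus := algebraMap_add_pow_eq_redei hs n x
  have hminus : (algebraMap F K x - s) ^ n =
      algebraMap F K (redeiG a n x) - algebraMap F K (redeiH a n x) * s := by
    simpa [← sub_eq_add_neg] using algebraMap_add_pow_eq_redei (t := -s) (by rwa [neg_sq]) n x
  have hsub : (algebraMap F K x - s) ^ n ≠ 0 := pow_ne_zero n (algebraMap_sub_ne_zero hs hns x)
  have hH : algebraMap F K (redeiH a n x) ≠ 0 := by
    intro hH
    have hpow : cayley s x ^ n = 1 := by
      rw [cayley, div_pow, div_eq_one_iff_eq hsub, hplus, hminus, hH]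
      ring
    refine cayley_ne_one hF hs hns x ?_
    simpa [hcop.gcd_eq_one] using pow_gcd_eq_one.mpr ⟨hpow, cayley_pow_card_add_one hF hs hns x⟩
  rw [redeiFun_eq_div, cayley, cayley, div_pow, hplus, hminus, map_div₀]
  field_simp

theorem minimalPeriod_redeiFun {n : ℕ} (hF : ringChar F ≠ 2) (hs : s ^ 2 = algebraMap F K a)
    (hns : ¬IsSquare a) (hcop : n.Coprime (Fintype.card F + 1)) (x : F) :
    Function.minimalPeriod (redeiFun a n) x = orderOf (n : ZMod (orderOf (cayley s x))) := by
  have hsc : Function.Semiconj (cayley s) (redeiFun a n) (· ^ n) :=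
    cayley_redeiFun hF hs hns hcop
  rw [← hsc.minimalPeriod_eq (cayley_injective hF hs hns) x,
    (isOfFinOrder_cayley hF hs hns x).minimalPeriod_pow]

theorem range_orderOf_cayley [IsAlgClosed K] (hF : ringChar F ≠ 2)
    (hs : s ^ 2 = algebraMap F K a) (hns : ¬IsSquare a) :
    Set.range (fun x : F => orderOf (cayley s x)) = {d | d ∣ Fintype.card F + 1 ∧ d ≠ 1} := by
  ext d
  constructor
  · rintro ⟨x, rfl⟩
    exact ⟨orderOf_dvd_of_pow_eq_one (cayley_pow_card_add_one hF hs hns x),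
      fun h => cayley_ne_one hF hs hns x (orderOf_eq_one_iff.mp h)⟩
  · rintro ⟨hd, hd1⟩
    have hcard : ((Fintype.card F + 1 : ℕ) : K) = 1 := by
      rw [Nat.cast_succ, ← map_natCast (algebraMap F K), FiniteField.cast_card_eq_zero, map_zero,
        zero_add]
    have : NeZero (d : K) := ⟨fun h0 => one_ne_zero (hcard ▸ zero_dvd_iff.mp
      (h0 ▸ Nat.cast_dvd_cast hd))⟩
    obtain ⟨ζ, hζ⟩ := HasEnoughRootsOfUnity.exists_primitiveRoot K d
    have hd0 : d ≠ 0 := ne_zero_of_dvd_ne_zero (Nat.succ_ne_zero _) hd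
    obtain ⟨x, hx⟩ := exists_cayley_eq hF hs hns (hζ.pow_eq_one_iff_dvd _ |>.mpr hd)
      (hζ.ne_one (by omega))
    exact ⟨x, by simp only [hx, ← hζ.eq_orderOf]⟩

end QuadraticExtension

theorem range_minimalPeriod_redeiFun {F : Type*} [Field F] [Fintype F] {a : F} {n : ℕ}
    (hF : ringChar F ≠ 2) (hns : ¬IsSquare a) (hcop : n.Coprime (Fintype.card F + 1)) :
    Set.range (Function.minimalPeriod (redeiFun a n)) =
      (fun d => orderOf (n : ZMod d)) '' {d | d ∣ Fintype.card F + 1 ∧ d ≠ 1} := by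
  obtain ⟨s, hs⟩ := IsAlgClosed.exists_pow_nat_eq (algebraMap F (AlgebraicClosure F) a) two_pos
  rw [← range_orderOf_cayley hF hs hns, ← Set.range_comp]
  exact congrArg Set.range (funext (minimalPeriod_redeiFun hF hs hns hcop))

theorem stmt_18_general {F : Type*} [Field F] [Fintype F] (q n j : ℕ) (a : F)
    (hq : Fintype.card F = q) (hodd : Odd q) (hns : ¬ IsSquare a)
    (hcop : Nat.Coprime n (q + 1)) :
    (∀ x : F, Function.minimalPeriod (redeiFun a n) x = j ∨
        Function.minimalPeriod (redeiFun a n) x = 1) ↔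
      ∀ p : ℕ, p.Prime → p ∣ q + 1 →
        ((n : ZMod (p ^ (q + 1).factorization p)) = 1 ∨
         (orderOf (n : ZMod (p ^ (q + 1).factorization p)) = j ∧ j ∣ p - 1) ∨
         (orderOf (n : ZMod (p ^ (q + 1).factorization p)) = j ∧
            2 ≤ (q + 1).factorization p ∧ j = p)) := by
  subst hq
  have hF : ringChar F ≠ 2 := fun h => by
    have := FiniteField.even_card_iff_char_two.mp h
    rw [Nat.odd_iff] at hodd
    omega
  have hrange := range_minimalPeriod_redeiFun hF hns hcop
  refine Iff.trans ?_ (ZMod.forall_dvd_orderOf_natCast_iff (Nat.succ_ne_zero _) hcop)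
  constructor
  · intro h d hd
    by_cases hd1 : d = 1
    · exact Or.inr (orderOf_eq_one_iff.mpr (hd1 ▸ Subsingleton.elim _ _))
    obtain ⟨x, hx⟩ : orderOf (n : ZMod d) ∈ Set.range (Function.minimalPeriod (redeiFun a n)) :=
      hrange ▸ ⟨d, ⟨hd, hd1⟩, rfl⟩
    exact hx ▸ h x
  · intro h x
    obtain ⟨d, ⟨hd, -⟩, hx⟩ :=
      hrange ▸ Set.mem_range_self (f := Function.minimalPeriod (redeiFun a n)) x
    exact hx ▸ h d hd

theorem stmt_18 {F : Type*} [Field F] [Fintype F] (q n j : ℕ) (a : F)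
    (hq : Fintype.card F = q) (hodd : Odd q) (ha : a ≠ 0) (hns : ¬ IsSquare a)
    (hn : 0 < n) (hcop : Nat.Coprime n (q + 1)) (hj : 0 < j) :
    (∀ x : F, Function.minimalPeriod (redeiFun a n) x = j ∨
        Function.minimalPeriod (redeiFun a n) x = 1) ↔
      ∀ p : ℕ, p.Prime → p ∣ q + 1 →
        ((n : ZMod (p ^ (q + 1).factorization p)) = 1 ∨
         (orderOf (n : ZMod (p ^ (q + 1).factorization p)) = j ∧ j ∣ p - 1) ∨
         (orderOf (n : ZMod (p ^ (q + 1).factorization p)) = j ∧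
            2 ≤ (q + 1).factorization p ∧ j = p)) :=
  stmt_18_general q n j a hq hodd hns hcop
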